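/- arXiv:1405.7339 — 7 statements merged into one kernel-verified Lean document; each statement's English description precedes it below -/
import Mathlib

section
/- For an infinite alphabet A, the full shift Σ_A with the topology generated by the generalized cylinder sets is compact. -/
/-!
An ultrafilter `f` on `Σ_A` converges to the word `x` read off coordinate by coordinate:
as long as every coordinate so far is `f`-almost surely a fixed letter, `x` takes that letter,
and at the first coordinate `n` where this fails `x` ends. Cylinders through `x` then lie in `f`:
their prefix constraints are among the settled coordinates, and a constraint `y_n ∉ F` at the
unsettled coordinate `n` holds `f`-almost surely: `{y_n ∈ F}` is a finite union of sets
`{y_n = a}`, none of which lies in `f`.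
-/

open Set Filter Topology

/-- Elements of the full shift `Σ_A`: `Option`-valued sequences that stay `none`
once they are `none` (so they are either everywhere-defined infinite sequences,
or finite words followed by `none`s; the empty word is the all-`none` sequence). -/
def IsWordFun {A : Type*} (x : ℕ → Option A) : Prop :=
  ∀ m n : ℕ, m ≤ n → x m = none → x n = none

/-- The full shift `Σ_A = A^ℕ ∪ {finite words over A}`. -/
def FullShift (A : Type*) : Type _ := {x : ℕ → Option A // IsWordFun x}

namespace FullShift

variable {A B : Type*}

/-- The length of an element of the full shift, in `ℕ∞`. -/
noncomputable def len (x : FullShift A) : ℕ∞ :=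
  sInf {n : ℕ∞ | ∃ m : ℕ, n = (m : ℕ∞) ∧ x.1 m = none}

/-- The shift map `σ`, deleting the first letter. -/
def shift (x : FullShift A) : FullShift A :=
  ⟨fun n => x.1 (n + 1), fun m n h hm => x.2 (m + 1) (n + 1) (by omega) hm⟩

/-- The empty word `∅`. -/
def emptyWord : FullShift A := ⟨fun _ => none, fun _ _ _ _ => rfl⟩

/-- The finite word determined by a list. -/
def word (l : List A) : FullShift A :=
  ⟨fun n => l[n]?, by
    intro m n h hm
    rw [List.getElem?_eq_none_iff] at hm ⊢
    omega⟩

/-- The infinite sequence determined by a function `ℕ → A`. -/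
def infSeq (g : ℕ → A) : FullShift A :=
  ⟨fun n => some (g n), by intro m n _ hm; simp at hm⟩

/-- Generalized cylinder set `Z(w, F)`: elements beginning with the finite word `w`
whose next letter, if any, does not lie in the finite set `F`. -/
def Cyl (w : List A) (F : Finset A) : Set (FullShift A) :=
  {y | (∀ i < w.length, y.1 i = w[i]?) ∧ ∀ a ∈ F, y.1 w.length ≠ some a}

/-- The topology on `Σ_A` generated by the generalized cylinder sets. -/
instance : TopologicalSpace (FullShift A) :=
  TopologicalSpace.generateFrom {S | ∃ (w : List A) (F : Finset A), S = Cyl w F}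

/-- A shift space: closed, shift-invariant, with the infinite-extension property. -/
def IsShiftSpace (Λ : Set (FullShift A)) : Prop :=
  IsClosed Λ ∧ (∀ x ∈ Λ, shift x ∈ Λ) ∧
    ∀ x ∈ Λ, ∀ n : ℕ, len x = (n : ℕ∞) →
      {a : A | ∃ z ∈ Λ, (∀ i < n, z.1 i = x.1 i) ∧ z.1 n = some a}.Infinite

/-- `u` occurs as a subblock of `x`. -/
def Occurs (u : List A) (x : FullShift A) : Prop :=
  ∃ i : ℕ, ∀ j < u.length, x.1 (i + j) = u[j]?

/-- The infinite sequences avoiding every word in `Fb` as a subblock. -/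
def XinfL (Fb : Set (List A)) : Set (FullShift A) :=
  {x | (∀ n, x.1 n ≠ none) ∧ ∀ u ∈ Fb, ¬ Occurs u x}

/-- The shift space `X_F` determined by the forbidden words `Fb`: the infinite
sequences avoiding `Fb`, together with the finite words `x` such that for
infinitely many `a ∈ A` some extension `x a y` lies in `X_F^inf`. -/
def XL (Fb : Set (List A)) : Set (FullShift A) :=
  XinfL Fb ∪ {x | ∃ n : ℕ, len x = (n : ℕ∞) ∧
    {a : A | ∃ z ∈ XinfL Fb, (∀ i < n, z.1 i = x.1 i) ∧ z.1 n = some a}.Infinite}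

/-- The infinite sequences all of whose length-`N` windows `v` satisfy `ft v = true`
(i.e. avoiding all length-`N` words `w` with `ft w = 0`). -/
def XinfT {N : ℕ} (ft : (Fin N → A) → Bool) : Set (FullShift A) :=
  {x | (∀ n, x.1 n ≠ none) ∧
    ∀ (i : ℕ) (v : Fin N → A), (∀ j : Fin N, x.1 (i + (j : ℕ)) = some (v j)) → ft v = true}

/-- The shift space `X_f` determined by forbidding the length-`N` words `w`
with `ft w = 0`. -/
def XT {N : ℕ} (ft : (Fin N → A) → Bool) : Set (FullShift A) :=
  XinfT ft ∪ {x | ∃ n : ℕ, len x = (n : ℕ∞) ∧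
    {a : A | ∃ z ∈ XinfT ft, (∀ i < n, z.1 i = x.1 i) ∧ z.1 n = some a}.Infinite}

/-- `Y` is an `M`-step shift space: determined by forbidden words of length `M + 1`,
equivalently by a function `g̃ : B^{M+1} → {0,1}`. -/
def IsStepShift (M : ℕ) (Y : Set (FullShift B)) : Prop :=
  ∃ gt : (Fin (M + 1) → B) → Bool, Y = XT gt

/-- `φ` is a conjugacy from `Λ` onto `Y`: bijective, continuous, shift-commuting
and length-preserving. -/
def IsConjugacy (Λ : Set (FullShift A)) (Y : Set (FullShift B))
    (φ : FullShift A → FullShift B) : Prop :=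
  Set.BijOn φ Λ Y ∧ ContinuousOn φ Λ ∧
    (∀ x ∈ Λ, φ (shift x) = shift (φ x)) ∧ ∀ x ∈ Λ, len (φ x) = len x

/-- `Λ` and `Y` are conjugate shift spaces. -/
def Conjugate (Λ : Set (FullShift A)) (Y : Set (FullShift B)) : Prop :=
  ∃ φ : FullShift A → FullShift B, IsConjugacy Λ Y φ

/-- The periodic sequence `(x_1 ⋯ x_M b)^∞` of period `M + 1`. -/
def per (M : ℕ) (x : Fin M → A) (b : A) : ℕ → A :=
  fun n => if h : n % (M + 1) < M then x ⟨n % (M + 1), h⟩ else b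

end FullShift

namespace FullShift

variable {A : Type*}

theorem le_nhds_iff {f : Filter (FullShift A)} {x : FullShift A} :
    f ≤ 𝓝 x ↔ ∀ w F, x ∈ Cyl w F → Cyl w F ∈ f := by
  simp only [TopologicalSpace.nhds_generateFrom, le_iInf_iff, le_principal_iff, mem_ofPred_eq]
  constructor
  · exact fun h w F hx => h _ ⟨hx, w, F, rfl⟩
  · rintro h _ ⟨hx, w, F, rfl⟩
    exact h w F hx

/-- Coordinate `n` is `f`-almost surely a fixed letter. -/
def Settles (f : Ultrafilter (FullShift A)) (n : ℕ) : Prop :=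
  ∃ a, {y : FullShift A | y.1 n = some a} ∈ f

theorem setOf_forall_ne_some_mem_of_not_settles {f : Ultrafilter (FullShift A)} {n : ℕ}
    (hn : ¬ Settles f n) (F : Finset A) : {y : FullShift A | ∀ a ∈ F, y.1 n ≠ some a} ∈ f := by
  have hunion : (⋃ a ∈ (F : Set A), {y : FullShift A | y.1 n = some a}) ∉ f := by
    rw [Ultrafilter.finite_biUnion_mem_iff F.finite_toSet]
    exact fun ⟨a, _, ha⟩ => hn ⟨a, ha⟩
  filter_upwards [Ultrafilter.compl_mem_iff_notMem.2 hunion] with y hy a ha hya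
  exact hy (mem_biUnion ha hya)

open Classical in
noncomputable def ulim (f : Ultrafilter (FullShift A)) : FullShift A :=
  ⟨fun n => if h : ∀ i ≤ n, Settles f i then some (h n le_rfl).choose else none,
    fun m n hmn hm => by
      simp only at hm ⊢
      refine dif_neg fun h => ?_
      rw [dif_pos fun i hi => h i (hi.trans hmn)] at hm
      exact Option.some_ne_none _ hm⟩

variable {f : Ultrafilter (FullShift A)} {n : ℕ}

theorem ulim_ne_none_iff : (ulim f).1 n ≠ none ↔ ∀ i ≤ n, Settles f i := by
  by_cases h : ∀ i ≤ n, Settles f i <;> simp [ulim, h]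

theorem setOf_eq_ulim_mem (hn : (ulim f).1 n ≠ none) :
    {y : FullShift A | y.1 n = (ulim f).1 n} ∈ f := by
  have h := ulim_ne_none_iff.1 hn
  have hval : (ulim f).1 n = some (h n le_rfl).choose := dif_pos h
  simpa only [hval] using (h n le_rfl).choose_spec

theorem not_settles_of_ulim_eq_none (hn : (ulim f).1 n = none)
    (hlt : ∀ i < n, (ulim f).1 i ≠ none) : ¬ Settles f n := by
  intro hs
  refine ulim_ne_none_iff.2 (fun i hi => ?_) hn
  rcases hi.lt_or_eq with hi | rfl
  · exact ulim_ne_none_iff.1 (hlt i hi) i le_rfl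
  · exact hs

theorem le_nhds_ulim (f : Ultrafilter (FullShift A)) : ↑f ≤ 𝓝 (ulim f) := by
  refine le_nhds_iff.2 fun w F ⟨hw, hF⟩ => ?_
  have hdef : ∀ i < w.length, (ulim f).1 i ≠ none := fun i hi => by simp [hw i hi, hi]
  have hprefix : {y : FullShift A | ∀ i < w.length, y.1 i = w[i]?} ∈ f := by
    filter_upwards [(eventually_all_finite (finite_Iio w.length)).2
      fun i hi => setOf_eq_ulim_mem (hdef i hi)] with y hy i hi
    rw [hy i hi, hw i hi]
  have hnext : {y : FullShift A | ∀ a ∈ F, y.1 w.length ≠ some a} ∈ f := by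
    by_cases hn : (ulim f).1 w.length = none
    · exact setOf_forall_ne_some_mem_of_not_settles (not_settles_of_ulim_eq_none hn hdef) F
    · filter_upwards [setOf_eq_ulim_mem hn] with y hy
      rwa [hy]
  filter_upwards [hprefix, hnext] with y h₁ h₂ using ⟨h₁, h₂⟩

end FullShift

theorem stmt1_general {A : Type*} : CompactSpace (FullShift A) := by
  rw [← isCompact_univ_iff, isCompact_iff_ultrafilter_le_nhds]
  exact fun f _ => ⟨FullShift.ulim f, trivial, FullShift.le_nhds_ulim f⟩

/-- The full shift `Σ_A` with the cylinder topology is compact. -/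
theorem stmt1 {A : Type*} [Infinite A] : CompactSpace (FullShift A) :=
  stmt1_general
end

section
/- For an infinite alphabet A, each generalized cylinder set Z(x,F) is a compact open subset of the full shift Σ_A, and hence Σ_A is zero-dimensional (has a basis of clopen sets). -/
open Set Filter Topology

/-!
Reading `none` as the point at infinity, `Σ_A` is the image of the compact space
`(A ∪ {∞})^ℕ` (one-point compactification of the discrete `A`) under the map cutting a
sequence off at its first `∞`. This map is continuous: the preimage of `Z(w, F)` is the clopen
set of sequences with `y_i = w_i` for `i < |w|` and `y_{|w|} ∉ F`, and the map carries this
compact set onto `Z(w, F)`. The complement of `Z(w, F)` is a finite union of cylinders (a first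
disagreement with `w` at some `i < |w|`, or `w` followed by a letter of `F`), so cylinders are
clopen, and finite intersections of them form a clopen basis.
-/

lemma exists_isTopologicalBasis_isClopen_of_eq_generateFrom {X : Type*} [t : TopologicalSpace X]
    {s : Set (Set X)} (hs : t = TopologicalSpace.generateFrom s) (hclosed : ∀ u ∈ s, IsClosed u) :
    ∃ b : Set (Set X), TopologicalSpace.IsTopologicalBasis b ∧ ∀ u ∈ b, IsClopen u := by
  refine ⟨_, TopologicalSpace.isTopologicalBasis_of_subbasis hs, ?_⟩
  rintro _ ⟨f, ⟨hfin, hfs⟩, rfl⟩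
  simp only [sInter_eq_biInter]
  exact hfin.isClopen_biInter fun u hu =>
    ⟨hclosed u (hfs hu), hs ▸ TopologicalSpace.isOpen_generateFrom_of_mem (hfs hu)⟩

lemma OnePoint.elim_none_some_eq_some_iff {X : Type*} {p : OnePoint X} {x : X} :
    p.elim none Option.some = Option.some x ↔ p = x := by
  induction p using OnePoint.rec <;> simp

namespace FullShift

variable {A : Type*}

lemma isOpen_cyl (w : List A) (F : Finset A) : IsOpen (Cyl w F) :=
  TopologicalSpace.isOpen_generateFrom_of_mem ⟨w, F, rfl⟩

lemma mem_cyl_take_iff {w : List A} {i : ℕ} (hi : i < w.length) {y : FullShift A} :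
    y ∈ Cyl (w.take i) {w[i]} ↔ (∀ j < i, y.1 j = w[j]?) ∧ y.1 i ≠ w[i]? := by
  have hlen : (w.take i).length = i := List.length_take_of_le hi.le
  simp only [Cyl, mem_ofPred_eq, hlen, Finset.mem_singleton, forall_eq,
    List.getElem?_eq_getElem hi]
  refine and_congr (forall₂_congr fun j hj => ?_) Iff.rfl
  rw [List.getElem?_take_of_lt hj]

lemma mem_cyl_append_singleton_iff {w : List A} {a : A} {y : FullShift A} :
    y ∈ Cyl (w ++ [a]) ∅ ↔ (∀ j < w.length, y.1 j = w[j]?) ∧ y.1 w.length = some a := by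
  simp only [Cyl, mem_ofPred_eq, List.length_append, List.length_singleton,
    Finset.notMem_empty, IsEmpty.forall_iff, implies_true, and_true, Nat.lt_succ_iff_lt_or_eq,
    or_imp, forall_and, forall_eq, List.getElem?_append_right le_rfl, Nat.sub_self]
  refine and_congr (forall₂_congr fun j hj => ?_) Iff.rfl
  rw [List.getElem?_append_left hj]

lemma compl_cyl (w : List A) (F : Finset A) :
    (Cyl w F)ᶜ =
      (⋃ (i : ℕ) (hi : i < w.length), Cyl (w.take i) {w[i]}) ∪ ⋃ a ∈ F, Cyl (w ++ [a]) ∅ := by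
  ext y
  simp only [mem_compl_iff, mem_union, mem_iUnion, mem_cyl_take_iff,
    mem_cyl_append_singleton_iff, exists_prop]
  by_cases hw : ∀ j < w.length, y.1 j = w[j]?
  · have hmem : y ∈ Cyl w F ↔ ∀ a ∈ F, y.1 w.length ≠ some a := and_iff_right hw
    have hno : ¬ ∃ i < w.length, (∀ j < i, y.1 j = w[j]?) ∧ y.1 i ≠ w[i]? :=
      fun ⟨i, hi, _, hne⟩ => hne (hw i hi)
    simp only [hmem, hno, false_or, and_iff_right hw, not_forall, not_not, exists_prop]
  · have hfirst : ∃ i, i < w.length ∧ y.1 i ≠ w[i]? := by push Not at hw; exact hw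
    classical
    refine iff_of_true (fun hy => hw hy.1) (Or.inl ⟨Nat.find hfirst, (Nat.find_spec hfirst).1,
      fun j hj => ?_, (Nat.find_spec hfirst).2⟩)
    by_contra hne
    exact Nat.find_min hfirst hj ⟨hj.trans (Nat.find_spec hfirst).1, hne⟩

lemma isClosed_cyl (w : List A) (F : Finset A) : IsClosed (Cyl w F) := by
  rw [← isOpen_compl_iff, compl_cyl]
  exact (isOpen_iUnion fun _ => isOpen_iUnion fun _ => isOpen_cyl _ _).union
    (isOpen_biUnion fun _ _ => isOpen_cyl _ _)

def truncate (y : ℕ → Option A) : FullShift A :=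
  ⟨fun n => if ∀ k ≤ n, y k ≠ none then y n else none, fun m n hmn hm => by
    dsimp only at hm ⊢
    split_ifs at hm ⊢ with hn hm'
    · exact absurd hm (hn m hmn)
    · exact absurd (fun k hk => hn k (hk.trans hmn)) hm'
    all_goals rfl⟩

lemma truncate_apply_of_forall_lt_ne_none {y : ℕ → Option A} {n : ℕ} (h : ∀ k < n, y k ≠ none) :
    (truncate y).1 n = y n := by
  by_cases hn : y n = none
  · change ite _ _ _ = _
    split_ifs <;> simp [hn]
  · refine if_pos fun k hk => ?_
    rcases hk.lt_or_eq with hk | rfl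
    exacts [h k hk, hn]

lemma ne_none_of_truncate_ne_none {y : ℕ → Option A} {n : ℕ} (h : (truncate y).1 n ≠ none) :
    y n ≠ none :=
  fun hyn => h (if_neg fun hy => hy n le_rfl hyn)

lemma truncate_val (x : FullShift A) : truncate x.1 = x := by
  refine Subtype.ext (funext fun n => ?_)
  change ite _ _ _ = _
  split_ifs with hn
  · rfl
  · push Not at hn
    obtain ⟨k, hk, hxk⟩ := hn
    exact (x.2 k n hk hxk).symm

lemma truncate_mem_cyl_iff {y : ℕ → Option A} {w : List A} {F : Finset A} :
    truncate y ∈ Cyl w F ↔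
      (∀ i < w.length, y i = w[i]?) ∧ ∀ a ∈ F, y w.length ≠ some a := by
  have hw : ∀ i < w.length, w[i]? ≠ none := fun i hi => by simp [hi]
  suffices h : ((∀ i < w.length, (truncate y).1 i = w[i]?) ∨ ∀ i < w.length, y i = w[i]?) →
      ∀ i ≤ w.length, (truncate y).1 i = y i by
    constructor
    · rintro ⟨hpre, hF⟩
      have h := h (Or.inl hpre)
      exact ⟨fun i hi => h i hi.le ▸ hpre i hi, h _ le_rfl ▸ hF⟩
    · rintro ⟨hpre, hF⟩
      have h := h (Or.inr hpre)
      exact ⟨fun i hi => (h i hi.le).symm ▸ hpre i hi, (h _ le_rfl).symm ▸ hF⟩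
  rintro (hpre | hpre) i hi <;> refine truncate_apply_of_forall_lt_ne_none fun k hk => ?_
  · exact ne_none_of_truncate_ne_none ((hpre k (hk.trans_le hi)).symm ▸ hw k (hk.trans_le hi))
  · exact (hpre k (hk.trans_le hi)).symm ▸ hw k (hk.trans_le hi)

section OnePoint

open scoped OnePoint

def truncateOnePoint (y : ℕ → OnePoint A) : FullShift A :=
  truncate fun n => (y n).elim none Option.some

lemma truncateOnePoint_surjective : Function.Surjective (truncateOnePoint (A := A)) := by
  intro x
  refine ⟨fun n => (x.1 n).elim ∞ OnePoint.some, ?_⟩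
  conv_rhs => rw [← truncate_val x]
  refine congrArg truncate (funext fun n => ?_)
  dsimp only
  cases x.1 n <;> rfl

variable [TopologicalSpace A] [DiscreteTopology A]

lemma isClopen_preimage_truncateOnePoint_cyl (w : List A) (F : Finset A) :
    IsClopen (truncateOnePoint ⁻¹' Cyl w F) := by
  have hcoord : ∀ n (a : A), IsClopen {y : ℕ → OnePoint A | y n = a} := by
    intro n a
    have hsingleton : IsClopen {(a : OnePoint A)} :=
      ⟨isClosed_singleton, image_singleton (f := OnePoint.some) ▸
        OnePoint.isOpen_image_coe.2 (isOpen_discrete {a})⟩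
    exact hsingleton.preimage (continuous_apply n)
  have hpre : truncateOnePoint ⁻¹' Cyl w F =
      (⋂ i : Fin w.length, {y | y i = (w[(i : ℕ)] : OnePoint A)}) ∩
        ⋂ a ∈ F, {y | y w.length = (a : OnePoint A)}ᶜ := by
    ext y
    simp only [truncateOnePoint, mem_preimage, truncate_mem_cyl_iff, mem_inter_iff, mem_iInter,
      mem_compl_iff, mem_ofPred_eq, Fin.forall_iff, ne_eq, OnePoint.elim_none_some_eq_some_iff]
    refine and_congr (forall₂_congr fun i hi => ?_) Iff.rfl
    rw [List.getElem?_eq_getElem hi, OnePoint.elim_none_some_eq_some_iff]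
  rw [hpre]
  exact (isClopen_iInter_of_finite fun i => hcoord _ _).inter
    (isClopen_biInter_finset fun a _ => (hcoord _ _).compl)

lemma continuous_truncateOnePoint : Continuous (truncateOnePoint (A := A)) :=
  continuous_generateFrom_iff.2 fun _ ⟨w, F, hS⟩ =>
    hS ▸ (isClopen_preimage_truncateOnePoint_cyl w F).isOpen

end OnePoint

theorem isCompact_cyl (w : List A) (F : Finset A) : IsCompact (Cyl w F) := by
  let : TopologicalSpace A := ⊥
  have : DiscreteTopology A := ⟨rfl⟩
  rw [← truncateOnePoint_surjective.image_preimage (Cyl w F)]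
  exact (isClopen_preimage_truncateOnePoint_cyl w F).isClosed.isCompact.image
    continuous_truncateOnePoint

end FullShift

theorem stmt2_general {A : Type*} :
    (∀ (w : List A) (F : Finset A),
      IsCompact (FullShift.Cyl w F) ∧ IsOpen (FullShift.Cyl w F)) ∧
    ∃ b : Set (Set (FullShift A)),
      TopologicalSpace.IsTopologicalBasis b ∧ ∀ s ∈ b, IsClopen s := by
  refine ⟨fun w F => ⟨FullShift.isCompact_cyl w F, FullShift.isOpen_cyl w F⟩,
    exists_isTopologicalBasis_isClopen_of_eq_generateFrom rfl ?_⟩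
  rintro _ ⟨w, F, rfl⟩
  exact FullShift.isClosed_cyl w F

/-- Each generalized cylinder is compact and open; hence `Σ_A` has a
basis of clopen sets (is zero-dimensional). -/
theorem stmt2 {A : Type*} [Infinite A] :
    (∀ (w : List A) (F : Finset A),
      IsCompact (FullShift.Cyl w F) ∧ IsOpen (FullShift.Cyl w F)) ∧
    ∃ b : Set (Set (FullShift A)),
      TopologicalSpace.IsTopologicalBasis b ∧ ∀ s ∈ b, IsClopen s :=
  stmt2_general
end

section
/- For an infinite alphabet A, the shift map σ : Σ_A → Σ_A is not continuous at the empty sequence ∅. -/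
open Set Filter Topology

/-- The shift map is not continuous at the empty sequence. -/
theorem stmt3 {A : Type*} [Infinite A] :
    ¬ ContinuousAt (FullShift.shift : FullShift A → FullShift A) FullShift.emptyWord := by
  classical
  intro hcont
  -- pick a letter a
  obtain ⟨a⟩ := (inferInstance : Infinite A).nonempty
  -- the target open set V = Cyl [] {a}
  set V : Set (FullShift A) := FullShift.Cyl ([] : List A) ({a} : Finset A) with hV
  have hVopen : IsOpen V :=
    TopologicalSpace.GenerateOpen.basic _ ⟨[], {a}, rfl⟩
  have hVmem : (FullShift.emptyWord : FullShift A) ∈ V := by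
    constructor
    · intro i hi; simp at hi
    · intro a' _ h; simp [FullShift.emptyWord] at h
  have hshift : FullShift.shift (FullShift.emptyWord : FullShift A) = FullShift.emptyWord := rfl
  -- key claim: any open set containing ∅ contains word [b,a] for all b outside a finite set
  have key : ∀ U : Set (FullShift A), IsOpen U →
      (FullShift.emptyWord ∈ U → ∃ F : Finset A, ∀ b ∉ F, FullShift.word [b, a] ∈ U) := by
    intro U hU
    induction hU with
    | basic s hs =>
      obtain ⟨w, F, rfl⟩ := hs
      intro hmem
      obtain ⟨h1, _⟩ := hmem
      have hw : w = [] := by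
        cases w with
        | nil => rfl
        | cons c t =>
          have := h1 0 (by simp)
          simp [FullShift.emptyWord] at this
      subst hw
      refine ⟨F, fun b hb => ⟨?_, ?_⟩⟩
      · intro i hi; simp at hi
      · intro a' ha' h
        simp only [List.length_nil] at h
        have : b = a' := by
          have : (FullShift.word [b, a]).1 0 = some b := rfl
          rw [this] at h; exact Option.some.inj h
        exact hb (this ▸ ha')
    | univ => exact fun _ => ⟨∅, fun _ _ => trivial⟩
    | inter s t _ _ ihs iht =>
      intro hmem
      obtain ⟨F1, h1⟩ := ihs hmem.1
      obtain ⟨F2, h2⟩ := iht hmem.2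
      exact ⟨F1 ∪ F2, fun b hb =>
        ⟨h1 b (fun h => hb (Finset.mem_union_left _ h)),
         h2 b (fun h => hb (Finset.mem_union_right _ h))⟩⟩
    | sUnion S _ ih =>
      intro hmem
      obtain ⟨t, htS, hmt⟩ := hmem
      obtain ⟨F, hF⟩ := ih t htS hmt
      exact ⟨F, fun b hb => ⟨t, htS, hF b hb⟩⟩
  -- use continuity
  have hVnhds : V ∈ nhds (FullShift.shift (FullShift.emptyWord : FullShift A)) := by
    rw [hshift]; exact hVopen.mem_nhds hVmem
  have hpre := hcont hVnhds
  rw [Filter.mem_map, mem_nhds_iff] at hpre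
  obtain ⟨U, hUsub, hUopen, hUmem⟩ := hpre
  obtain ⟨F, hF⟩ := key U hUopen hUmem
  obtain ⟨b, hb⟩ := F.exists_notMem
  have hmem := hUsub (hF b hb)
  -- shift (word [b,a]) has first letter a, contradicting membership in V
  obtain ⟨_, h2⟩ := hmem
  exact h2 a (Finset.mem_singleton_self a) rfl
end

section
/- For an infinite alphabet A, the shift map σ : Σ_A → Σ_A restricted to Σ_A \ {∅} is continuous. -/
open Set Filter Topology

/-! Away from `∅` every point begins with some letter `a`, so the preimage under `σ` of a
cylinder `Z(w, F)` is the union over `a ∈ A` of the cylinders `Z(a w, F)`, hence open. -/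

namespace FullShift

variable {A : Type*}

lemma ne_emptyWord_iff {y : FullShift A} : y ≠ emptyWord ↔ ∃ a, y.1 0 = some a := by
  constructor
  · intro h
    cases h0 : y.1 0 with
    | none => exact absurd (Subtype.ext (funext fun n => y.2 0 n n.zero_le h0)) h
    | some a => exact ⟨a, rfl⟩
  · rintro ⟨a, ha⟩ rfl
    simp [emptyWord] at ha

lemma mem_cyl_cons {a : A} {w : List A} {F : Finset A} {y : FullShift A} :
    y ∈ Cyl (a :: w) F ↔ y.1 0 = some a ∧ shift y ∈ Cyl w F := by
  constructor
  · rintro ⟨hw, hF⟩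
    refine ⟨by simpa using hw 0 (by simp), fun i hi => ?_, fun b hb => ?_⟩
    · simpa [shift] using hw (i + 1) (by simpa using hi)
    · simpa [shift] using hF b hb
  · rintro ⟨h0, hw, hF⟩
    refine ⟨fun i hi => ?_, fun b hb => ?_⟩
    · cases i with
      | zero => simpa using h0
      | succ n => simpa [shift] using hw n (by simpa using hi)
    · simpa [shift] using hF b hb

lemma compl_emptyWord_inter_preimage_shift_cyl (w : List A) (F : Finset A) :
    {emptyWord}ᶜ ∩ shift ⁻¹' Cyl w F = ⋃ a : A, Cyl (a :: w) F := by
  ext y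
  simp only [Set.mem_inter_iff, Set.mem_compl_singleton_iff, ne_emptyWord_iff,
    Set.mem_preimage, Set.mem_iUnion, mem_cyl_cons, exists_and_right]

lemma isOpen_compl_emptyWord_inter_preimage_shift_cyl (w : List A) (F : Finset A) :
    IsOpen ({emptyWord}ᶜ ∩ shift ⁻¹' Cyl w F) := by
  rw [compl_emptyWord_inter_preimage_shift_cyl]
  exact isOpen_iUnion fun a => isOpen_cyl _ _

end FullShift

theorem stmt4_general {A : Type*} :
    ContinuousOn (FullShift.shift : FullShift A → FullShift A)
      {FullShift.emptyWord}ᶜ := by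
  rw [continuousOn_iff_continuous_domRestrict]
  refine continuous_generateFrom_iff.2 ?_
  rintro _ ⟨w, F, rfl⟩
  refine isOpen_induced_iff.2
    ⟨_, FullShift.isOpen_compl_emptyWord_inter_preimage_shift_cyl w F, ?_⟩
  ext
  simp

/-- The shift map restricted to `Σ_A \ {∅}` is continuous. -/
theorem stmt4 {A : Type*} [Infinite A] :
    ContinuousOn (FullShift.shift : FullShift A → FullShift A)
      {FullShift.emptyWord}ᶜ :=
  stmt4_general
end

section
/- Let A be infinite and Λ ⊆ Σ_A a shift space (closed, shift-invariant, with the infinite-extension property). Then the set Λ^inf of infinite sequences in Λ is dense in Λ. -/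
/-!
A finite word `x ∈ Λ` of length `n` has basic neighbourhoods that only forbid finitely many
letters at position `n`, so the infinite-extension property supplies a point `z ∈ Λ` beginning
with `x a` for an allowed letter `a`. Applying the extension property once per position grows `z`
into a chain of points of `Λ`, each a prefix of the next; its limit is an infinite sequence
extending `z`, and it lies in `Λ` because `Λ` is closed.
-/

open Set Filter Topology

namespace FullShift

variable {A : Type*}

theorem ne_none_of_le {x : FullShift A} {m n : ℕ} (hmn : m ≤ n) (hn : x.1 n ≠ none) :
    x.1 m ≠ none :=
  fun hm => hn (x.2 m n hmn hm)

theorem exists_first_none {x : FullShift A} (hx : ¬∀ n, x.1 n ≠ none) :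
    ∃ n, (∀ i < n, x.1 i ≠ none) ∧ x.1 n = none := by
  classical
  push Not at hx
  exact ⟨Nat.find hx, fun i hi => Nat.find_min hx hi, Nat.find_spec hx⟩

theorem len_eq_of_first_none {x : FullShift A} {n : ℕ} (hlt : ∀ i < n, x.1 i ≠ none)
    (hn : x.1 n = none) : len x = n := by
  refine le_antisymm (sInf_le ⟨n, rfl, hn⟩) (le_sInf ?_)
  rintro _ ⟨m, rfl, hm⟩
  exact_mod_cast le_of_not_gt fun hmn => hlt m hmn hm

theorem exists_agree_subset_of_mem_nhds {y : FullShift A} {U : Set (FullShift A)}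
    (hU : U ∈ 𝓝 y) : ∃ m, {z : FullShift A | ∀ i < m, z.1 i = y.1 i} ⊆ U := by
  have hbasis := hasBasis_iInf_principal
    (s := fun m => {z : FullShift A | ∀ i < m, z.1 i = y.1 i})
    (directed_of_isDirected_le fun m m' hm z hz i hi => hz i (hi.trans_le hm))
  have hle : Tendsto id (⨅ m, 𝓟 {z : FullShift A | ∀ i < m, z.1 i = y.1 i}) (𝓝 y) := by
    refine TopologicalSpace.tendsto_nhds_generateFrom_iff.2 ?_
    rintro _ ⟨w, F, rfl⟩ ⟨hw, hF⟩
    refine mem_iInf_of_mem (w.length + 1) fun z hz => ⟨fun i hi => ?_, fun a ha => ?_⟩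
    · exact (hz i (by omega)).trans (hw i hi)
    · exact (hz _ (by omega)).trans_ne (hF a ha)
  simpa using hbasis.mem_iff.1 (hle hU)

theorem exists_finset_subset_of_mem_nhds {x : FullShift A} {n : ℕ} (hn : x.1 n = none)
    {U : Set (FullShift A)} (hU : U ∈ 𝓝 x) :
    ∃ G : Finset A,
      {z : FullShift A | (∀ i < n, z.1 i = x.1 i) ∧ ∀ a ∈ G, z.1 n ≠ some a} ⊆ U := by
  classical
  set s : Finset A → Set (FullShift A) :=
    fun G => {z | (∀ i < n, z.1 i = x.1 i) ∧ ∀ a ∈ G, z.1 n ≠ some a}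
  have hbasis := hasBasis_iInf_principal (s := s) <| directed_of_isDirected_le
    fun G G' hG z hz => ⟨hz.1, fun a ha => hz.2 a (Finset.mem_of_subset hG ha)⟩
  have hle : Tendsto id (⨅ G, 𝓟 (s G)) (𝓝 x) := by
    refine TopologicalSpace.tendsto_nhds_generateFrom_iff.2 ?_
    rintro _ ⟨w, F, rfl⟩ ⟨hw, hF⟩
    have hwn : w.length ≤ n := by
      by_contra! hlt
      simpa [hn, List.getElem?_eq_getElem hlt] using hw n hlt
    refine mem_iInf_of_mem F fun z ⟨hz, hzF⟩ => ⟨fun i hi => ?_, fun a ha => ?_⟩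
    · exact (hz i (by omega)).trans (hw i hi)
    · rcases hwn.lt_or_eq with hlt | rfl
      · exact (hz _ hlt).trans_ne (hF a ha)
      · exact hzF a ha
  simpa using hbasis.mem_iff.1 (hle hU)

theorem mem_closure_of_forall_exists_agree {S : Set (FullShift A)} {y : FullShift A}
    (h : ∀ m, ∃ z ∈ S, ∀ i < m, z.1 i = y.1 i) : y ∈ closure S := by
  refine mem_closure_iff_nhds.2 fun U hU => ?_
  obtain ⟨m, hm⟩ := exists_agree_subset_of_mem_nhds hU
  obtain ⟨z, hzS, hz⟩ := h m
  exact ⟨z, hm hz, hzS⟩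

def IsPrefix (z z' : FullShift A) : Prop :=
  ∀ i, z.1 i ≠ none → z'.1 i = z.1 i

theorem IsPrefix.refl (z : FullShift A) : IsPrefix z z := fun _ _ => rfl

theorem IsPrefix.trans {z₁ z₂ z₃ : FullShift A} (h₁₂ : IsPrefix z₁ z₂) (h₂₃ : IsPrefix z₂ z₃) :
    IsPrefix z₁ z₃ := fun i hi => (h₂₃ i (h₁₂ i hi ▸ hi)).trans (h₁₂ i hi)

theorem IsPrefix.ne_none {z z' : FullShift A} (h : IsPrefix z z') {i : ℕ} (hi : z.1 i ≠ none) :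
    z'.1 i ≠ none :=
  h i hi ▸ hi

theorem exists_limit_of_isPrefix_succ (f : ℕ → FullShift A)
    (hf : ∀ k, IsPrefix (f k) (f (k + 1))) (hdef : ∀ k, (f (k + 1)).1 k ≠ none) :
    ∃ y : FullShift A, (∀ n, y.1 n ≠ none) ∧
      ∀ k, IsPrefix (f k) y ∧ ∀ i < k, y.1 i = (f k).1 i := by
  have hmono : ∀ k l, k ≤ l → IsPrefix (f k) (f l) := fun k l hkl => by
    induction l, hkl using Nat.le_induction with
    | base => exact IsPrefix.refl _
    | succ l _ ih => exact ih.trans (hf l)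
  have hdef' : ∀ k, ∀ i < k, (f k).1 i ≠ none := fun k i hi =>
    (hmono (i + 1) k hi).ne_none (hdef i)
  let y : FullShift A := ⟨fun i => (f (i + 1)).1 i, fun m _ _ hm => absurd hm (hdef m)⟩
  have hy : ∀ k, IsPrefix (f k) y := fun k i hi => by
    rcases le_total k (i + 1) with hk | hk
    · exact hmono k (i + 1) hk i hi
    · exact (hmono (i + 1) k hk i (hdef i)).symm
  exact ⟨y, hdef, fun k => ⟨hy k, fun i hi => hy k i (hdef' k i hi)⟩⟩

variable {Λ : Set (FullShift A)}

theorem IsShiftSpace.exists_isPrefix_ne_none_of_forall_lt (h : IsShiftSpace Λ) {z : FullShift A}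
    (hz : z ∈ Λ) {n : ℕ} (hlt : ∀ i < n, z.1 i ≠ none) :
    ∃ z' ∈ Λ, IsPrefix z z' ∧ z'.1 n ≠ none := by
  by_cases hn : z.1 n = none
  swap
  · exact ⟨z, hz, IsPrefix.refl z, hn⟩
  obtain ⟨a, z', hz', hagree, ha⟩ := (h.2.2 z hz n (len_eq_of_first_none hlt hn)).nonempty
  refine ⟨z', hz', fun i hi => hagree i ?_, by simp [ha]⟩
  by_contra! hni
  exact hi (z.2 n i hni hn)

theorem IsShiftSpace.exists_isPrefix_ne_none (h : IsShiftSpace Λ) {z : FullShift A} (hz : z ∈ Λ)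
    (n : ℕ) : ∃ z' ∈ Λ, IsPrefix z z' ∧ z'.1 n ≠ none := by
  induction n with
  | zero => exact h.exists_isPrefix_ne_none_of_forall_lt hz fun i hi => absurd hi i.not_lt_zero
  | succ n ih =>
    obtain ⟨z₁, hz₁, hzz₁, hn⟩ := ih
    obtain ⟨z₂, hz₂, hz₁z₂, hn'⟩ := h.exists_isPrefix_ne_none_of_forall_lt hz₁ fun i hi =>
      ne_none_of_le (Nat.lt_succ_iff.1 hi) hn
    exact ⟨z₂, hz₂, hzz₁.trans hz₁z₂, hn'⟩

theorem IsShiftSpace.exists_infinite_isPrefix (h : IsShiftSpace Λ) {z : FullShift A}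
    (hz : z ∈ Λ) : ∃ y ∈ Λ, (∀ n, y.1 n ≠ none) ∧ IsPrefix z y := by
  choose next hnext using fun (w : Λ) (k : ℕ) => h.exists_isPrefix_ne_none w.2 k
  let f : ℕ → Λ := fun k => Nat.rec ⟨z, hz⟩ (fun k w => ⟨next w k, (hnext w k).1⟩) k
  obtain ⟨y, hyinf, hy⟩ := exists_limit_of_isPrefix_succ (fun k => (f k).1)
    (fun k => (hnext (f k) k).2.1) (fun k => (hnext (f k) k).2.2)
  have hyΛ : y ∈ Λ := h.1.closure_subset <| mem_closure_of_forall_exists_agree fun m =>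
    ⟨(f m).1, (f m).2, fun i hi => ((hy m).2 i hi).symm⟩
  exact ⟨y, hyΛ, hyinf, (hy 0).1⟩

end FullShift

theorem stmt5_general {A : Type*} (Λ : Set (FullShift A))
    (h : FullShift.IsShiftSpace Λ) :
    Λ ⊆ closure {x ∈ Λ | ∀ n, x.1 n ≠ none} := by
  intro x hx
  by_cases hinf : ∀ n, x.1 n ≠ none
  · exact subset_closure ⟨hx, hinf⟩
  obtain ⟨n, hlt, hn⟩ := FullShift.exists_first_none hinf
  refine mem_closure_iff_nhds.2 fun U hU => ?_
  obtain ⟨G, hG⟩ := FullShift.exists_finset_subset_of_mem_nhds hn hU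
  obtain ⟨a, ⟨z, hz, hzx, hza⟩, haG⟩ :=
    ((h.2.2 x hx n (FullShift.len_eq_of_first_none hlt hn)).sdiff G.finite_toSet).nonempty
  obtain ⟨y, hy, hyinf, hzy⟩ := h.exists_infinite_isPrefix hz
  refine ⟨y, hG ⟨fun i hi => ?_, fun b hb => ?_⟩, hy, hyinf⟩
  · rw [hzy i (hzx i hi ▸ hlt i hi), hzx i hi]
  · rw [hzy n (by simp [hza]), hza, Ne, Option.some_inj]
    rintro rfl
    exact haG hb

/-- In a shift space `Λ`, the set `Λ^inf` of infinite sequences is dense in `Λ`. -/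
theorem stmt5 {A : Type*} [Infinite A] (Λ : Set (FullShift A))
    (h : FullShift.IsShiftSpace Λ) :
    Λ ⊆ closure {x ∈ Λ | ∀ n, x.1 n ≠ none} :=
  stmt5_general Λ h
end

section
/- Every subset Λ ⊆ Σ_A is a shift space if and only if Λ = X_F for some set of forbidden words F ⊆ ⋃_{k≥1} A^k, where X_F = X_F^inf ∪ X_F^fin with X_F^inf the infinite sequences avoiding all words of F as subblocks and X_F^fin the finite words x such that xay ∈ X_F^inf for infinitely many a ∈ A (with suitable y ∈ A^ℕ). -/
open Set Filter Topology

/-!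
A shift space `Λ` is recovered from its infinite points: take for `F` the nonempty words that
occur in no infinite point of `Λ`. An infinite sequence avoiding `F` is approximated by shifts
of infinite points of `Λ`, hence lies in `Λ` by closedness; a finite point of `Λ` has infinitely
many one-letter extensions in `Λ`, and each of them continues to an infinite point of `Λ`
(extend one letter at a time and pass to the limit), so the finite points of `Λ` are exactly
those of `X_F`. Conversely, `X_F` is closed because a cylinder around a limit point meets
`X_F`, hence (by the definition of its finite part) meets `X_F^inf`.
-/

namespace FullShift

variable {A : Type*}

section Length

theorem len_eq_coe_iff {x : FullShift A} {n : ℕ} :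
    len x = n ↔ x.1 n = none ∧ ∀ k < n, x.1 k ≠ none := by
  constructor
  · intro h
    have hne : {m : ℕ∞ | ∃ k : ℕ, m = k ∧ x.1 k = none}.Nonempty := by
      by_contra he
      simp [len, not_nonempty_iff_eq_empty.1 he] at h
    obtain ⟨k, hk, hxk⟩ := csInf_mem hne
    rw [← len, h, Nat.cast_inj] at hk
    refine ⟨hk ▸ hxk, fun j hj hxj => ?_⟩
    have : len x ≤ j := sInf_le ⟨j, rfl, hxj⟩
    rw [h, Nat.cast_le] at this
    omega
  · rintro ⟨hn, hlt⟩
    refine le_antisymm (sInf_le ⟨n, rfl, hn⟩) (le_sInf ?_)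
    rintro _ ⟨k, rfl, hk⟩
    by_contra! hkn
    exact hlt k (by exact_mod_cast hkn) hk

theorem forall_ne_none_or_exists_len_eq (x : FullShift A) :
    (∀ n, x.1 n ≠ none) ∨ ∃ n : ℕ, len x = n := by
  by_cases h : len x = ⊤
  · refine Or.inl fun n hn => ?_
    have : len x ≤ n := sInf_le ⟨n, rfl, hn⟩
    simp [h] at this
  · obtain ⟨n, hn⟩ := ENat.ne_top_iff_exists.1 h
    exact Or.inr ⟨n, hn.symm⟩

theorem eq_of_len_eq_of_agree {x y : FullShift A} {n : ℕ} (hx : len x = n) (hy : len y = n)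
    (h : ∀ i < n, x.1 i = y.1 i) : x = y := by
  refine Subtype.ext (funext fun i => ?_)
  rcases lt_or_ge i n with hi | hi
  · exact h i hi
  · rw [x.2 n i hi (len_eq_coe_iff.1 hx).1, y.2 n i hi (len_eq_coe_iff.1 hy).1]

theorem shift_eq_self_of_len_eq_zero {x : FullShift A} (h : len x = (0 : ℕ)) : shift x = x := by
  have h0 := (len_eq_coe_iff.1 h).1
  exact Subtype.ext (funext fun i => by
    rw [show (shift x).1 i = x.1 (i + 1) from rfl, x.2 0 _ (Nat.zero_le _) h0,
      x.2 0 _ (Nat.zero_le _) h0])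

theorem len_shift_of_len_eq_succ {x : FullShift A} {n : ℕ} (h : len x = (n + 1 : ℕ)) :
    len (shift x) = n := by
  rw [len_eq_coe_iff] at h ⊢
  exact ⟨h.1, fun k hk => h.2 (k + 1) (by omega)⟩

theorem iterate_shift_apply (x : FullShift A) (i j : ℕ) : (shift^[i] x).1 j = x.1 (i + j) := by
  induction i generalizing j with
  | zero => simp
  | succ i ih =>
    rw [Function.iterate_succ_apply']
    exact (ih (j + 1)).trans (congrArg x.1 (by omega))

theorem exists_list_eq_prefix {x : FullShift A} {N : ℕ} (hdef : ∀ i < N, x.1 i ≠ none) :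
    ∃ u : List A, u.length = N ∧ ∀ i < N, x.1 i = u[i]? := by
  refine ⟨List.ofFn fun i : Fin N => (x.1 i).get (Option.isSome_iff_ne_none.2 (hdef i i.2)),
    List.length_ofFn, fun i hi => ?_⟩
  simp [hi]

end Length

section Topology

theorem mem_cyl_iff_of_mem {w : List A} {F : Finset A} {y z : FullShift A} (hy : y ∈ Cyl w F) :
    z ∈ Cyl w F ↔ (∀ i < w.length, z.1 i = y.1 i) ∧ ∀ a ∈ F, z.1 w.length ≠ some a :=
  and_congr_left' (forall₂_congr fun i hi => by rw [hy.1 i hi])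

theorem cyl_subset_cyl {y : FullShift A} {w₁ w₂ : List A} {F₁ F₂ : Finset A}
    (h₁ : y ∈ Cyl w₁ F₁) (h₂ : y ∈ Cyl w₂ F₂) (hlen : w₁.length ≤ w₂.length)
    (hF : w₁.length = w₂.length → F₁ ⊆ F₂) : Cyl w₂ F₂ ⊆ Cyl w₁ F₁ := by
  intro z hz
  rw [mem_cyl_iff_of_mem h₂] at hz
  rw [mem_cyl_iff_of_mem h₁]
  refine ⟨fun i hi => hz.1 i (hi.trans_le hlen), fun a ha => ?_⟩
  rcases hlen.lt_or_eq with hlt | heq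
  · rw [hz.1 _ hlt]
    exact h₁.2 a ha
  · rw [heq]
    exact hz.2 a (hF heq ha)

theorem directedOn_cyl (y : FullShift A) :
    DirectedOn (· ⊇ ·) {s | y ∈ s ∧ ∃ w F, s = Cyl w F} := by
  classical
  rintro _ ⟨h₁, w₁, F₁, rfl⟩ _ ⟨h₂, w₂, F₂, rfl⟩
  rcases lt_trichotomy w₁.length w₂.length with hlt | heq | hlt
  · exact ⟨_, ⟨h₂, w₂, F₂, rfl⟩,
      cyl_subset_cyl h₁ h₂ hlt.le (fun h => absurd h hlt.ne), subset_rfl⟩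
  · have h : y ∈ Cyl w₂ (F₁ ∪ F₂) := ⟨h₂.1, fun a ha =>
      (Finset.mem_union.1 ha).elim (heq ▸ h₁.2 a) (h₂.2 a)⟩
    exact ⟨_, ⟨h, w₂, _, rfl⟩, cyl_subset_cyl h₁ h heq.le fun _ => Finset.subset_union_left,
      cyl_subset_cyl h₂ h le_rfl fun _ => Finset.subset_union_right⟩
  · exact ⟨_, ⟨h₁, w₁, F₁, rfl⟩, subset_rfl,
      cyl_subset_cyl h₂ h₁ hlt.le (fun h => absurd h hlt.ne)⟩

theorem hasBasis_nhds_cyl (y : FullShift A) :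
    (𝓝 y).HasBasis (fun s => y ∈ s ∧ ∃ w F, s = Cyl w F) id := by
  rw [TopologicalSpace.nhds_generateFrom]
  refine hasBasis_biInf_principal (directedOn_cyl y) ⟨Cyl [] ∅, ?_, [], ∅, rfl⟩
  exact ⟨fun i hi => absurd hi (Nat.not_lt_zero i), fun a ha => absurd ha (Finset.notMem_empty a)⟩

theorem mem_closure_iff_agree {S : Set (FullShift A)} {y : FullShift A} :
    y ∈ closure S ↔ ∀ (N : ℕ) (F : Finset A), (∀ i < N, y.1 i ≠ none) →
      (∀ a ∈ F, y.1 N ≠ some a) → ∃ z ∈ S, (∀ i < N, z.1 i = y.1 i) ∧ ∀ a ∈ F, z.1 N ≠ some a := by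
  rw [mem_closure_iff_nhds_basis (hasBasis_nhds_cyl y)]
  constructor
  · intro h N F hdef hF
    obtain ⟨w, rfl, hw⟩ := exists_list_eq_prefix hdef
    have hy : y ∈ Cyl w F := ⟨hw, hF⟩
    obtain ⟨z, hzS, hz⟩ := h _ ⟨hy, w, F, rfl⟩
    exact ⟨z, hzS, (mem_cyl_iff_of_mem hy).1 hz⟩
  · rintro h _ ⟨hy, w, F, rfl⟩
    obtain ⟨z, hzS, hz⟩ := h _ F (fun i hi => by simp [hy.1 i hi, hi]) hy.2
    exact ⟨z, hzS, (mem_cyl_iff_of_mem hy).2 hz⟩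

theorem mem_closure_of_forall_agree {S : Set (FullShift A)} {y : FullShift A}
    (h : ∀ N, ∃ z ∈ S, ∀ i < N, z.1 i = y.1 i) : y ∈ closure S := by
  refine mem_closure_iff_agree.2 fun N F _ hF => ?_
  obtain ⟨z, hzS, hz⟩ := h (N + 1)
  exact ⟨z, hzS, fun i hi => hz i (by omega), by rw [hz N (by omega)]; exact hF⟩

end Topology

def followers (S : Set (FullShift A)) (x : FullShift A) (n : ℕ) : Set A :=
  {a | ∃ z ∈ S, (∀ i < n, z.1 i = x.1 i) ∧ z.1 n = some a}

theorem followers_mono {S T : Set (FullShift A)} (h : S ⊆ T) (x : FullShift A) (n : ℕ) :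
    followers S x n ⊆ followers T x n := fun _ ⟨z, hz, hzx⟩ => ⟨z, h hz, hzx⟩

theorem followers_succ_subset_followers_shift {S : Set (FullShift A)} (hS : MapsTo shift S S)
    (x : FullShift A) (n : ℕ) : followers S x (n + 1) ⊆ followers S (shift x) n :=
  fun _ ⟨z, hz, hag, hzn⟩ => ⟨shift z, hS hz, fun i hi => hag (i + 1) (by omega), hzn⟩

theorem mem_closure_of_followers_infinite {S : Set (FullShift A)} {x : FullShift A} {n : ℕ}
    (hn : len x = n) (hS : (followers S x n).Infinite) : x ∈ closure S := by
  refine mem_closure_iff_agree.2 fun N F hdef hF => ?_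
  have hNn : N ≤ n := by
    by_contra! h
    exact hdef n h (len_eq_coe_iff.1 hn).1
  obtain ⟨a, ⟨z, hzS, hag, hzn⟩, haF⟩ := hS.exists_notMem_finset F
  refine ⟨z, hzS, fun i hi => hag i (hi.trans_le hNn), fun b hb => ?_⟩
  rcases hNn.lt_or_eq with hlt | rfl
  · rw [hag N hlt]
    exact hF b hb
  · rw [hzn]
    rintro ⟨⟩
    exact haF hb

section ShiftSpace

variable {Λ : Set (FullShift A)}

theorem exists_extend_one (hΛ : IsShiftSpace Λ) {z : FullShift A} (hz : z ∈ Λ) {m : ℕ}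
    (hdef : ∀ i < m, z.1 i ≠ none) : ∃ z' ∈ Λ, (∀ i < m, z'.1 i = z.1 i) ∧ z'.1 m ≠ none := by
  by_cases hm : z.1 m = none
  · obtain ⟨a, z', hz', hag, hz'm⟩ := (hΛ.2.2 z hz m (len_eq_coe_iff.2 ⟨hm, hdef⟩)).nonempty
    exact ⟨z', hz', hag, by simp [hz'm]⟩
  · exact ⟨z, hz, fun _ _ => rfl, hm⟩

theorem exists_limit_of_coherent (g : ℕ → FullShift A) (m : ℕ)
    (hdef : ∀ k, ∀ i < m + k, (g k).1 i ≠ none)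
    (hcoh : ∀ k, ∀ i < m + k, (g (k + 1)).1 i = (g k).1 i) :
    ∃ y : FullShift A, (∀ i, y.1 i ≠ none) ∧ ∀ k, ∀ i < m + k, y.1 i = (g k).1 i := by
  have hcoh' : ∀ k l, k ≤ l → ∀ i < m + k, (g l).1 i = (g k).1 i := by
    intro k l hkl
    induction l, hkl using Nat.le_induction with
    | base => exact fun _ _ => rfl
    | succ l hkl ih => exact fun i hi => (hcoh l i (by omega)).trans (ih i hi)
  refine ⟨⟨fun i => (g (i + 1)).1 i, fun i _ _ h => absurd h (hdef _ i (by omega))⟩,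
    fun i => hdef _ i (by omega), fun k i hi => ?_⟩
  rcases le_total (i + 1) k with h | h
  · exact (hcoh' _ _ h i (by omega)).symm
  · exact hcoh' _ _ h i hi

theorem exists_infinite_extension (hΛ : IsShiftSpace Λ) {z : FullShift A} (hz : z ∈ Λ) {m : ℕ}
    (hdef : ∀ i < m, z.1 i ≠ none) :
    ∃ y ∈ Λ, (∀ i, y.1 i ≠ none) ∧ ∀ i < m, y.1 i = z.1 i := by
  -- the hypotheses on `w` sit inside the existential so that `choose` yields a total `next`
  have step : ∀ (k : ℕ) (w : FullShift A), ∃ w', w ∈ Λ → (∀ i < m + k, w.1 i ≠ none) →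
      w' ∈ Λ ∧ (∀ i < m + k, w'.1 i = w.1 i) ∧ w'.1 (m + k) ≠ none := fun k w => by
    by_cases hw : w ∈ Λ ∧ ∀ i < m + k, w.1 i ≠ none
    · obtain ⟨w', hw'⟩ := exists_extend_one hΛ hw.1 hw.2
      exact ⟨w', fun _ _ => hw'⟩
    · exact ⟨w, fun h₁ h₂ => absurd ⟨h₁, h₂⟩ hw⟩
  choose next hnext using step
  let g : ℕ → FullShift A := fun k => Nat.rec z next k
  have hg : ∀ k, g k ∈ Λ ∧ ∀ i < m + k, (g k).1 i ≠ none := by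
    intro k
    induction k with
    | zero => exact ⟨hz, hdef⟩
    | succ k ih =>
      obtain ⟨hmem, hag, hnew⟩ := hnext k (g k) ih.1 ih.2
      refine ⟨hmem, fun i hi => ?_⟩
      rcases (show i < m + k ∨ i = m + k by omega) with hi | rfl
      · exact (hag i hi).symm ▸ ih.2 i hi
      · exact hnew
  obtain ⟨y, hyinf, hy⟩ := exists_limit_of_coherent g m (fun k => (hg k).2)
    (fun k => (hnext k (g k) (hg k).1 (hg k).2).2.1)
  refine ⟨y, ?_, hyinf, hy 0⟩
  rw [← hΛ.1.closure_eq]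
  exact mem_closure_of_forall_agree fun N =>
    ⟨g N, (hg N).1, fun i hi => (hy N i (by omega)).symm⟩

end ShiftSpace

theorem Occurs.of_shift {u : List A} {x : FullShift A} (h : Occurs u (shift x)) : Occurs u x := by
  obtain ⟨i, hi⟩ := h
  exact ⟨i + 1, fun j hj => by rw [show i + 1 + j = i + j + 1 by omega]; exact hi j hj⟩

theorem shift_mem_XinfL {Fb : Set (List A)} {x : FullShift A} (hx : x ∈ XinfL Fb) :
    shift x ∈ XinfL Fb :=
  ⟨fun k => hx.1 (k + 1), fun u hu hocc => hx.2 u hu hocc.of_shift⟩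

theorem exists_mem_XinfL_agree_of_mem_XL {Fb : Set (List A)} {x : FullShift A} (hx : x ∈ XL Fb)
    {N : ℕ} (hdef : ∀ i < N, x.1 i ≠ none) : ∃ z ∈ XinfL Fb, ∀ i < N, z.1 i = x.1 i := by
  rcases hx with hx | ⟨n, hn, hS⟩
  · exact ⟨x, hx, fun _ _ => rfl⟩
  · have hNn : N ≤ n := by
      by_contra! h
      exact hdef n h (len_eq_coe_iff.1 hn).1
    obtain ⟨a, z, hz, hag, -⟩ := hS.nonempty
    exact ⟨z, hz, fun i hi => hag i (hi.trans_le hNn)⟩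

theorem isClosed_XL (Fb : Set (List A)) : IsClosed (XL Fb) := by
  refine isClosed_of_closure_subset fun y hy => ?_
  rcases forall_ne_none_or_exists_len_eq y with hinf | ⟨n, hn⟩
  · refine Or.inl ⟨hinf, fun u hu ⟨i, hi⟩ => ?_⟩
    obtain ⟨z, hz, hzy, -⟩ := mem_closure_iff_agree.1 hy (i + u.length) ∅
      (fun j _ => hinf j) (by simp)
    obtain ⟨z', hz', hz'z⟩ := exists_mem_XinfL_agree_of_mem_XL hz
      (fun j hj => (hzy j hj).symm ▸ hinf j)
    exact hz'.2 u hu ⟨i, fun j hj => by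
      rw [hz'z _ (by omega), hzy _ (by omega)]; exact hi j hj⟩
  · by_contra hyX
    have hfin : (followers (XinfL Fb) y n).Finite := by
      by_contra h
      exact hyX (Or.inr ⟨n, hn, h⟩)
    obtain ⟨hyn, hdef⟩ := len_eq_coe_iff.1 hn
    obtain ⟨z, hz, hzy, hzF⟩ := mem_closure_iff_agree.1 hy n hfin.toFinset hdef (by simp [hyn])
    cases hzn : z.1 n with
    | none =>
      exact hyX (eq_of_len_eq_of_agree (len_eq_coe_iff.2 ⟨hzn, fun i hi => (hzy i hi).symm ▸
        hdef i hi⟩) hn hzy ▸ hz)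
    | some b =>
      obtain ⟨z', hz', hz'z⟩ := exists_mem_XinfL_agree_of_mem_XL hz (N := n + 1) fun i hi => by
        rcases (show i < n ∨ i = n by omega) with hi | rfl
        · exact (hzy i hi).symm ▸ hdef i hi
        · simp [hzn]
      refine hzF b (hfin.mem_toFinset.2 ⟨z', hz', fun i hi => ?_, ?_⟩) hzn
      · rw [hz'z i (by omega), hzy i hi]
      · rw [hz'z n (by omega), hzn]

theorem isShiftSpace_XL (Fb : Set (List A)) : IsShiftSpace (XL Fb) := by
  refine ⟨isClosed_XL Fb, ?_, ?_⟩
  · rintro x (hx | ⟨_ | n, hn, hS⟩)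
    · exact Or.inl (shift_mem_XinfL hx)
    · rw [shift_eq_self_of_len_eq_zero hn]
      exact Or.inr ⟨0, hn, hS⟩
    · exact Or.inr ⟨n, len_shift_of_len_eq_succ hn,
        hS.mono (followers_succ_subset_followers_shift (fun _ => shift_mem_XinfL) x n)⟩
  · rintro x (hx | ⟨n', hn', hS⟩) n hn
    · exact absurd (len_eq_coe_iff.1 hn).1 (hx.1 n)
    · obtain rfl : n' = n := by exact_mod_cast hn'.symm.trans hn
      exact hS.mono (followers_mono subset_union_left x n')

def forbiddenWords (Λ : Set (FullShift A)) : Set (List A) :=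
  {u | u ≠ [] ∧ ∀ p ∈ Λ, (∀ k, p.1 k ≠ none) → ¬ Occurs u p}

theorem XinfL_forbiddenWords {Λ : Set (FullShift A)} (hcl : IsClosed Λ) (hinv : MapsTo shift Λ Λ) :
    XinfL (forbiddenWords Λ) = {x ∈ Λ | ∀ n, x.1 n ≠ none} := by
  refine Subset.antisymm (fun x ⟨hinf, havoid⟩ => ⟨?_, hinf⟩)
    fun p ⟨hp, hinf⟩ => ⟨hinf, fun u hu => hu.2 p hp hinf⟩
  rw [← hcl.closure_eq]
  refine mem_closure_of_forall_agree fun N => ?_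
  -- a prefix of length `N + 1` is nonempty, so it can only fail to be forbidden by occurring
  obtain ⟨u, hul, hu⟩ := exists_list_eq_prefix (x := x) (N := N + 1) fun i _ => hinf i
  have hocc : Occurs u x := ⟨0, fun j hj => by rw [zero_add]; exact hu j (hul ▸ hj)⟩
  have hu_ne : u ≠ [] := by rintro rfl; simp at hul
  obtain ⟨p, hp, hpinf, i, hi⟩ : ∃ p ∈ Λ, (∀ k, p.1 k ≠ none) ∧ Occurs u p := by
    by_contra! h
    exact havoid u ⟨hu_ne, h⟩ hocc
  exact ⟨shift^[i] p, hinv.iterate i hp, fun j hj => by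
    rw [iterate_shift_apply, hi j (by omega), hu j (by omega)]⟩

theorem eq_XL_forbiddenWords {Λ : Set (FullShift A)} (hΛ : IsShiftSpace Λ) :
    Λ = XL (forbiddenWords Λ) := by
  have hXinf := XinfL_forbiddenWords hΛ.1 hΛ.2.1
  refine Subset.antisymm (fun x hx => ?_) ?_
  · rcases forall_ne_none_or_exists_len_eq x with hinf | ⟨n, hn⟩
    · exact Or.inl (hXinf ▸ ⟨hx, hinf⟩)
    refine Or.inr ⟨n, hn, (hΛ.2.2 x hx n hn).mono ?_⟩
    rintro a ⟨z, hz, hag, hzn⟩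
    obtain ⟨y, hy, hyinf, hyz⟩ := exists_infinite_extension hΛ hz (m := n + 1) fun i hi => by
      rcases (show i < n ∨ i = n by omega) with hi | rfl
      · exact (hag i hi).symm ▸ (len_eq_coe_iff.1 hn).2 i hi
      · simp [hzn]
    exact ⟨y, hXinf ▸ ⟨hy, hyinf⟩, fun i hi => (hyz i (by omega)).trans (hag i hi),
      (hyz n (by omega)).trans hzn⟩
  · rintro x (hx | ⟨n, hn, hS⟩)
    · exact (hXinf ▸ hx).1
    · rw [← hΛ.1.closure_eq]
      exact mem_closure_of_followers_infinite hn
        (hS.mono (followers_mono (hXinf ▸ fun _ h => h.1) x n))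

end FullShift

theorem stmt6_general {A : Type*} (Λ : Set (FullShift A)) :
    FullShift.IsShiftSpace Λ ↔
      ∃ Fb : Set (List A), (∀ u ∈ Fb, u ≠ []) ∧ Λ = FullShift.XL Fb := by
  constructor
  · exact fun hΛ => ⟨_, fun _ hu => hu.1, FullShift.eq_XL_forbiddenWords hΛ⟩
  · rintro ⟨Fb, -, rfl⟩
    exact FullShift.isShiftSpace_XL Fb

/-- `Λ` is a shift space iff `Λ = X_F` for some set of forbidden
(nonempty) finite words `F`. -/
theorem stmt6 {A : Type*} [Infinite A] (Λ : Set (FullShift A)) :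
    FullShift.IsShiftSpace Λ ↔
      ∃ Fb : Set (List A), (∀ u ∈ Fb, u ≠ []) ∧ Λ = FullShift.XL Fb :=
  stmt6_general Λ
end

section
/- Let f̃ : A^{M+2} → {0,1} satisfy: for every (x_1,…,x_{M+1}) ∈ A^{M+1} only finitely many x_{M+2} ∈ A have f̃(x_1,…,x_{M+2}) = 1. Then the associated (M+1)-step shift space X_f contains no finite word of length ≥ M+2. In particular X_f contains no element of length 2M+1 when M ≥ 1. -/
open Set Filter Topology

/-- Under condition (2), `X_f` contains no finite word of length `≥ M + 2`;
in particular none of length `2M + 1` when `M ≥ 1`. -/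
theorem stmt10 {A : Type*} [Infinite A] (M : ℕ) (ft : (Fin (M + 2) → A) → Bool)
    (h2 : ∀ v : Fin (M + 1) → A, {b : A | ft (Fin.snoc v b) = true}.Finite) :
    (∀ x ∈ FullShift.XT ft, ∀ n : ℕ, FullShift.len x = (n : ℕ∞) → n < M + 2) ∧
    (1 ≤ M → ∀ x ∈ FullShift.XT ft, FullShift.len x ≠ ((2 * M + 1 : ℕ) : ℕ∞)) := by
  have key : ∀ x ∈ FullShift.XT ft, ∀ n : ℕ, FullShift.len x = (n : ℕ∞) → n < M + 2 := by
    intro x hx n hlen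
    by_contra hn
    push_neg at hn
    rcases hx with hinf | ⟨n', hlen', hset⟩
    · have hempty : {m : ℕ∞ | ∃ k : ℕ, m = (k : ℕ∞) ∧ x.1 k = none} = ∅ := by
        ext m
        simp only [Set.mem_setOf_eq, Set.mem_empty_iff_false, iff_false, not_exists]
        rintro k ⟨rfl, hk⟩
        exact hinf.1 k hk
      have : FullShift.len x = ⊤ := by
        rw [FullShift.len, hempty, sInf_empty]
      rw [this] at hlen
      exact (ENat.top_ne_coe n) hlen
    · have hnn' : n' = n := by
        rw [hlen'] at hlen
        exact_mod_cast hlen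
      subst hnn'
      have hsome : ∀ i, i < n' → x.1 i ≠ none := by
        intro i hi hni
        have hle : FullShift.len x ≤ (i : ℕ∞) := sInf_le ⟨i, rfl, hni⟩
        rw [hlen'] at hle
        have : n' ≤ i := by exact_mod_cast hle
        omega
      set v : Fin (M + 1) → A := fun j =>
        (x.1 (n' - (M + 1) + j)).get
          (Option.isSome_iff_ne_none.mpr (hsome _ (by omega))) with hv
      have hsub : {a : A | ∃ z ∈ FullShift.XinfT ft,
          (∀ i < n', z.1 i = x.1 i) ∧ z.1 n' = some a} ⊆
          {b : A | ft (Fin.snoc v b) = true} := by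
        rintro a ⟨z, hz, hagree, hzn⟩
        have hwin : ∀ j : Fin (M + 2),
            z.1 (n' - (M + 1) + (j : ℕ)) = some ((Fin.snoc v a : Fin (M + 2) → A) j) := by
          intro j
          by_cases hj : (j : ℕ) < M + 1
          · have hpos : n' - (M + 1) + (j : ℕ) < n' := by omega
            rw [hagree _ hpos]
            have : (Fin.snoc v a : Fin (M + 2) → A) j = v ⟨(j : ℕ), hj⟩ := by
              simp only [Fin.snoc, hj, dif_pos, cast_eq]
              congr 1
            rw [this, hv]
            exact (Option.some_get _).symm
          · have hje : (j : ℕ) = M + 1 := by omega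
            have hpos : n' - (M + 1) + (j : ℕ) = n' := by omega
            rw [hpos, hzn]
            have : (Fin.snoc v a : Fin (M + 2) → A) j = a := by
              simp [Fin.snoc, hj]
            rw [this]
        exact hz.2 (n' - (M + 1)) (Fin.snoc v a) hwin
      exact hset ((h2 v).subset hsub)
  refine ⟨key, fun hM x hx hlen => ?_⟩
  have := key x hx (2 * M + 1) hlen
  omega
end
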